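/- arXiv:1802.03823 — 4 statements merged into one kernel-verified Lean document; each statement's English description precedes it below -/
import Mathlib

section
/- Let A be an abelian group such that A/p^i is finite for every i ≥ 1, and suppose there exists n ≥ 1 such that p^n·A = p^s·A for every s > n. If D denotes the maximal p-divisible subgroup of A, then A ≅ D ⊕ F for some finite subgroup F (after also assuming A is m-divisible for all m coprime to p, F is finite of p-power order). -/
/-- The multiplication-by-`n` endomorphism of an abelian group. -/
def mulBy (A : Type*) [AddCommGroup A] (n : ℕ) : A →+ A where
  toFun a := n • a
  map_zero' := smul_zero n
  map_add' a b := smul_add n a b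

/-- The subgroup `p^i · A` of an abelian group `A`. -/
def pPart (A : Type*) [AddCommGroup A] (p i : ℕ) : AddSubgroup A :=
  (mulBy A (p ^ i)).range

/-- If `A/p^i` is finite for every `i ≥ 1` and `p^n A = p^s A` for every `s > n`
(for some `n ≥ 1`), and `D` is the maximal `p`-divisible subgroup of `A`, then
`A ≅ D ⊕ F` for a finite subgroup `F`; if moreover `A` is `m`-divisible for all
`m` coprime to `p`, then `F` has `p`-power order. -/
theorem stmt0 (p : ℕ) (hp : p.Prime) (A : Type) [AddCommGroup A]
    (hfin : ∀ i : ℕ, 1 ≤ i → Finite (A ⧸ pPart A p i))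
    (n : ℕ) (hn : 1 ≤ n) (hstab : ∀ s : ℕ, n < s → pPart A p n = pPart A p s)
    (D : AddSubgroup A)
    (hDdiv : ∀ x ∈ D, ∃ y ∈ D, p • y = x)
    (hDmax : ∀ D' : AddSubgroup A, (∀ x ∈ D', ∃ y ∈ D', p • y = x) → D' ≤ D) :
    ∃ F : AddSubgroup A, Finite F ∧ Nonempty (A ≃+ D × F) ∧
      ((∀ m : ℕ, Nat.Coprime m p → ∀ x : A, ∃ y : A, m • y = x) →
        ∃ k : ℕ, Nat.card F = p ^ k) := by
  classical
  -- iterated p-divisibility of D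
  have hpow : ∀ (k : ℕ) (x : A), x ∈ D → ∃ y ∈ D, p ^ k • y = x := by
    intro k
    induction k with
    | zero => intro x hx; exact ⟨x, hx, by simp⟩
    | succ k ih =>
      intro x hx
      obtain ⟨y, hy, hyx⟩ := hDdiv x hx
      obtain ⟨z, hz, hzy⟩ := ih y hy
      refine ⟨z, hz, ?_⟩
      rw [pow_succ, mul_smul, smul_comm, hzy, hyx]
  -- `D` is exactly `p^n A`
  have hD : D = pPart A p n := by
    apply le_antisymm
    · intro x hx
      obtain ⟨y, _, hy⟩ := hpow n x hx
      exact ⟨y, hy⟩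
    · apply hDmax
      intro x hx
      have hx' : x ∈ pPart A p (n + 1) := by
        rw [← hstab (n + 1) (by omega)]; exact hx
      obtain ⟨b, hb⟩ := hx'
      refine ⟨p ^ n • b, ⟨b, rfl⟩, ?_⟩
      have : p • p ^ n • b = p ^ (n + 1) • b := by
        rw [← mul_smul, pow_succ, mul_comm]
      rw [this]; exact hb
  have hfinQ : Finite (A ⧸ D) := by rw [hD]; exact hfin n hn
  -- the quotient has exponent dividing `p ^ n`
  have hexp : ∀ q : A ⧸ D, p ^ n • q = 0 := by
    intro q
    obtain ⟨a, rfl⟩ := QuotientAddGroup.mk_surjective q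
    have h1 : ((p ^ n • a : A) : A ⧸ D) = p ^ n • ((a : A ⧸ D)) :=
      map_nsmul (QuotientAddGroup.mk' D) (p ^ n) a
    rw [← h1, QuotientAddGroup.eq_zero_iff]
    rw [hD]; exact ⟨a, rfl⟩
  -- structure theorem for the finite quotient
  obtain ⟨ι, hι, m, hm1, ⟨e⟩⟩ :=
    AddCommGroup.equiv_directSum_zmod_of_finite' (A ⧸ D)
  have hmne : ∀ i, NeZero (m i) := fun i => ⟨by have := hm1 i; omega⟩
  -- each `m i` is a power of `p`
  have hmp : ∀ i, ∃ k : ℕ, m i = p ^ k := by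
    intro i
    have h1 : p ^ n • (DirectSum.of (fun j => ZMod (m j)) i 1) = 0 := by
      have h2 := congrArg e (hexp (e.symm (DirectSum.of (fun j => ZMod (m j)) i 1)))
      rwa [map_nsmul, e.apply_symm_apply, map_zero] at h2
    rw [← map_nsmul] at h1
    have h3 := congrArg (fun f => f i) h1
    simp only [DirectSum.of_eq_same, DirectSum.zero_apply] at h3
    have h4 : ((p ^ n : ℕ) : ZMod (m i)) = 0 := by
      have h5 : ((p ^ n : ℕ) : ZMod (m i)) = (p ^ n) • (1 : ZMod (m i)) := by
        rw [nsmul_eq_mul, mul_one]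
      rw [h5, h3]
    have hdvd : m i ∣ p ^ n := (ZMod.natCast_eq_zero_iff (p ^ n) (m i)).mp h4
    obtain ⟨k, _, hk⟩ := (Nat.dvd_prime_pow hp).mp hdvd
    exact ⟨k, hk⟩
  -- choose torsion lifts of the generators
  have key : ∀ i, ∃ b : A, m i • b = 0 ∧
      ((b : A ⧸ D)) = e.symm (DirectSum.of (fun j => ZMod (m j)) i 1) := by
    intro i
    obtain ⟨k, hk⟩ := hmp i
    obtain ⟨a, ha⟩ := QuotientAddGroup.mk_surjective
      (e.symm (DirectSum.of (fun j => ZMod (m j)) i 1))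
    have hma : m i • a ∈ D := by
      rw [← QuotientAddGroup.eq_zero_iff,
        show ((m i • a : A) : A ⧸ D) = m i • ((a : A ⧸ D)) from
          map_nsmul (QuotientAddGroup.mk' D) (m i) a, ha]
      rw [show m i • e.symm (DirectSum.of (fun j => ZMod (m j)) i 1)
          = e.symm (m i • DirectSum.of (fun j => ZMod (m j)) i 1) from
        (map_nsmul e.symm (m i) _).symm]
      have : m i • DirectSum.of (fun j => ZMod (m j)) i 1 = 0 := by
        rw [← map_nsmul]
        convert map_zero (DirectSum.of (fun j => ZMod (m j)) i)
        rw [nsmul_eq_mul, mul_one, ZMod.natCast_self]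
      rw [this, map_zero]
    obtain ⟨y, hyD, hy⟩ := hpow k (m i • a) hma
    refine ⟨a - y, ?_, ?_⟩
    · simp only [hk] at hy ⊢
      rw [smul_sub, hy, sub_self]
    · rw [show ((a - y : A) : A ⧸ D) = ((a : A ⧸ D)) - ((y : A ⧸ D)) from
        map_sub (QuotientAddGroup.mk' D) a y,
        (QuotientAddGroup.eq_zero_iff y).mpr hyD, sub_zero, ha]
  choose b hb1 hb2 using key
  -- the homomorphic section
  have hlift : ∀ i, (zmultiplesHom A (b i)) ((m i : ℤ)) = 0 := by
    intro i
    show ((m i : ℤ)) • b i = 0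
    rw [natCast_zsmul]; exact hb1 i
  let s : (DirectSum ι fun i => ZMod (m i)) →+ A :=
    DirectSum.toAddMonoid fun i => ZMod.lift (m i) ⟨zmultiplesHom A (b i), hlift i⟩
  let σ : (A ⧸ D) →+ A := s.comp e.toAddMonoidHom
  have hsec : ∀ q : A ⧸ D, ((σ q : A) : A ⧸ D) = q := by
    have hhom : (QuotientAddGroup.mk' D).comp s = e.symm.toAddMonoidHom := by
      refine DirectSum.addHom_ext fun i x => ?_
      have hx : x = x.val • (1 : ZMod (m i)) := by
        have := hmne i
        rw [nsmul_eq_mul, mul_one, ZMod.natCast_zmod_val]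
      rw [hx, map_nsmul (DirectSum.of (fun j => ZMod (m j)) i), map_nsmul, map_nsmul]
      congr 1
      show ((s (DirectSum.of (fun j => ZMod (m j)) i 1) : A) : A ⧸ D)
          = e.symm (DirectSum.of (fun j => ZMod (m j)) i 1)
      have h1 : s (DirectSum.of (fun j => ZMod (m j)) i 1) = b i := by
        show DirectSum.toAddMonoid _ (DirectSum.of (fun j => ZMod (m j)) i 1) = b i
        rw [DirectSum.toAddMonoid_of]
        have : (1 : ZMod (m i)) = ((1 : ℤ) : ZMod (m i)) := by simp
        rw [this, ZMod.lift_coe]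
        show ((1 : ℤ)) • b i = b i
        simp
      rw [h1, hb2 i]
    intro q
    have := congrArg (fun f : (DirectSum ι fun i => ZMod (m i)) →+ (A ⧸ D) => f (e q)) hhom
    simpa [σ, s] using this
  have hσinj : Function.Injective σ := by
    intro x y hxy
    have := congrArg (fun a : A => ((a : A ⧸ D))) hxy
    simpa [hsec] using this
  -- the complement
  refine ⟨σ.range, ?_, ⟨?_⟩, ?_⟩
  · -- finiteness
    exact Finite.of_injective (fun x : σ.range => ((x.1 : A) : A ⧸ D)) (by
      rintro ⟨x, qx, rfl⟩ ⟨y, qy, rfl⟩ h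
      simp only [hsec] at h
      simp [h])
  · -- the splitting equivalence
    have hmem : ∀ a : A, a - σ ((a : A ⧸ D)) ∈ D := by
      intro a
      rw [← QuotientAddGroup.eq_zero_iff,
        show ((a - σ ((a : A ⧸ D)) : A) : A ⧸ D)
            = ((a : A ⧸ D)) - ((σ ((a : A ⧸ D)) : A) : A ⧸ D) from
          map_sub (QuotientAddGroup.mk' D) _ _, hsec, sub_self]
    have hσD : ∀ f : A, f ∈ σ.range → σ ((f : A ⧸ D)) = f := by
      rintro _ ⟨q, rfl⟩
      rw [hsec]
    have hrinv : ∀ x : D × σ.range,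
        (((x.1 : A) + (x.2 : A)) - σ ((((x.1 : A) + (x.2 : A) : A) : A ⧸ D)),
          σ ((((x.1 : A) + (x.2 : A) : A) : A ⧸ D))) = ((x.1 : A), (x.2 : A)) := by
      rintro ⟨⟨d, hd⟩, ⟨f, hf⟩⟩
      have hπ : (((d + f : A)) : A ⧸ D) = ((f : A ⧸ D)) := by
        rw [show ((d + f : A) : A ⧸ D) = ((d : A ⧸ D)) + ((f : A ⧸ D)) from
          map_add (QuotientAddGroup.mk' D) d f,
          (QuotientAddGroup.eq_zero_iff d).mpr hd, zero_add]
      have hσf : σ ((f : A ⧸ D)) = f := hσD f hf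
      ext
      · show d + f - σ (((d + f : A)) : A ⧸ D) = d
        rw [hπ, hσf]; abel
      · show σ (((d + f : A)) : A ⧸ D) = f
        rw [hπ, hσf]
    exact
      { toFun := fun a => (⟨a - σ ((a : A ⧸ D)), hmem a⟩,
          ⟨σ ((a : A ⧸ D)), ⟨(a : A ⧸ D), rfl⟩⟩)
        invFun := fun x => (x.1 : A) + (x.2 : A)
        left_inv := fun a => by simp
        right_inv := fun x => by
          have h := hrinv x
          rw [Prod.mk.injEq] at h
          exact Prod.ext (Subtype.ext h.1) (Subtype.ext h.2)
        map_add' := fun a₁ a₂ => by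
          ext
          · show a₁ + a₂ - σ (((a₁ + a₂ : A) : A ⧸ D))
              = (a₁ - σ ((a₁ : A ⧸ D))) + (a₂ - σ ((a₂ : A ⧸ D)))
            rw [show ((a₁ + a₂ : A) : A ⧸ D) = ((a₁ : A ⧸ D)) + ((a₂ : A ⧸ D)) from
              map_add (QuotientAddGroup.mk' D) a₁ a₂, map_add]
            abel
          · show σ (((a₁ + a₂ : A) : A ⧸ D))
              = σ ((a₁ : A ⧸ D)) + σ ((a₂ : A ⧸ D))
            rw [show ((a₁ + a₂ : A) : A ⧸ D) = ((a₁ : A ⧸ D)) + ((a₂ : A ⧸ D)) from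
              map_add (QuotientAddGroup.mk' D) a₁ a₂, map_add] }
  · -- the p-power order claim (holds unconditionally)
    intro _
    haveI : Fact p.Prime := ⟨hp⟩
    have hpg : IsPGroup p (Multiplicative (A ⧸ D)) := by
      intro g
      refine ⟨n, ?_⟩
      have h2 := congrArg Multiplicative.ofAdd (hexp g.toAdd)
      rw [ofAdd_nsmul, ofAdd_toAdd, ofAdd_zero] at h2
      exact h2
    obtain ⟨k, hk⟩ := IsPGroup.iff_card.mp hpg
    refine ⟨k, ?_⟩
    have h1 : Nat.card σ.range = Nat.card (A ⧸ D) :=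
      Nat.card_congr (Equiv.ofBijective
        (fun q : A ⧸ D => (⟨σ q, ⟨q, rfl⟩⟩ : σ.range))
        ⟨fun x y hxy => hσinj (congrArg Subtype.val hxy), by
          rintro ⟨_, q, rfl⟩; exact ⟨q, rfl⟩⟩).symm
    rw [h1, ← hk]
    rfl
end

section
/- Let A be an abelian group, n ≥ 1, and suppose A/p is generated by the images of elements of a subset S ⊆ A consisting of elements killed by p^n (i.e., every s ∈ S satisfies p^n s = 0). Then p^n A is p-divisible, i.e., p^n A = p^{n+1} A. -/
/-- If `A/pA` is generated by the images of a set `S` of elements killed by `p^n`,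
then `p^n A` is `p`-divisible, i.e. `p^n A = p^{n+1} A`. -/
theorem stmt1 (p : ℕ) (hp : p.Prime) (A : Type) [AddCommGroup A]
    (n : ℕ) (hn : 1 ≤ n) (S : Set A)
    (hS : ∀ s ∈ S, (p ^ n) • s = 0)
    (hgen : AddSubgroup.closure ((QuotientAddGroup.mk' (pPart A p 1)) '' S) = ⊤) :
    pPart A p n = pPart A p (n + 1) := by
  apply le_antisymm
  · rintro x ⟨a, rfl⟩
    have hgen' : (AddSubgroup.closure S).map (QuotientAddGroup.mk' (pPart A p 1)) = ⊤ := by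
      rw [AddMonoidHom.map_closure]; exact hgen
    have ha : QuotientAddGroup.mk' (pPart A p 1) a ∈
        (AddSubgroup.closure S).map (QuotientAddGroup.mk' (pPart A p 1)) := by
      rw [hgen']; trivial
    obtain ⟨t, ht, hta⟩ := ha
    have hsub : a - t ∈ pPart A p 1 := by
      have := (QuotientAddGroup.eq_iff_sub_mem).mp hta.symm
      simpa using this
    obtain ⟨b, hb⟩ := hsub
    have hkill : (p ^ n) • t = 0 := by
      have hle : AddSubgroup.closure S ≤ (mulBy A (p ^ n)).ker := by
        rw [AddSubgroup.closure_le]; intro s hs; exact hS s hs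
      exact hle ht
    refine ⟨b, ?_⟩
    have hb' : (p : ℕ) • b = a - t := by simpa [mulBy] using hb
    show (p ^ (n + 1)) • b = (p ^ n) • a
    calc (p ^ (n + 1)) • b = (p ^ n) • ((p : ℕ) • b) := by
          rw [pow_succ, mul_smul]
      _ = (p ^ n) • a - (p ^ n) • t := by rw [hb', smul_sub]
      _ = (p ^ n) • a := by rw [hkill, sub_zero]
  · rintro x ⟨a, rfl⟩
    refine ⟨p • a, ?_⟩
    show (p ^ n) • ((p : ℕ) • a) = (p ^ (n + 1)) • a
    rw [pow_succ, mul_smul]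
end

section
/- Let A be an abelian group and L/K a structure providing group homomorphisms res : A_K → A_L and N : A_L → A_K with N ∘ res = multiplication by d on A_K, where d = p^l·m with gcd(m,p) = 1. Assume A_K is m-divisible and that p^{n+r}·A_L ⊆ p^{n+r+1}·A_L for some n, r ≥ 0 (i.e., p^{n+r} A_L is p-divisible). Then p^{l+n+r}·A_K = p^{l+n+r+1}·A_K, i.e., p^N A_K is p-divisible for N = l + n + r. -/
lemma mem_pPart_iff {A : Type*} [AddCommGroup A] {p i : ℕ} {x : A} :
    x ∈ pPart A p i ↔ ∃ y : A, p ^ i • y = x := Iff.rfl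

/-- Norm–restriction argument: if `N ∘ res = [d]` with `d = p^l·m`, `gcd(m,p)=1`,
`A_K` is `m`-divisible and `p^{n+r} A_L` is `p`-divisible, then
`p^{l+n+r} A_K` is `p`-divisible. -/
theorem stmt11 (p : ℕ) (hp : p.Prime) (l m n r : ℕ) (hm : Nat.Coprime m p)
    (AK AL : Type) [AddCommGroup AK] [AddCommGroup AL]
    (res : AK →+ AL) (N : AL →+ AK)
    (hNres : ∀ x : AK, N (res x) = (p ^ l * m) • x)
    (hmdiv : ∀ x : AK, ∃ y : AK, m • y = x)
    (hL : ∀ x ∈ pPart AL p (n + r), x ∈ pPart AL p (n + r + 1)) :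
    pPart AK p (l + n + r) = pPart AK p (l + n + r + 1) := by
  have key : ∀ k : ℕ, ∀ x ∈ pPart AL p (n + r), x ∈ pPart AL p (n + r + k) := by
    intro k
    induction k with
    | zero => intro x hx; simpa using hx
    | succ k ih =>
      intro x hx
      obtain ⟨y, hy⟩ := ih x hx
      obtain ⟨z, hz⟩ := hL (p ^ (n + r) • y) ⟨y, rfl⟩
      refine ⟨z, ?_⟩
      have hz' : p ^ (n + r + 1) • z = p ^ (n + r) • y := hz
      have hy' : p ^ (n + r + k) • y = x := hy
      show p ^ (n + r + (k + 1)) • z = x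
      calc p ^ (n + r + (k + 1)) • z
          = p ^ k • p ^ (n + r + 1) • z := by
            rw [smul_smul]; congr 1; ring
        _ = p ^ k • p ^ (n + r) • y := by rw [hz']
        _ = x := by rw [smul_smul, ← hy']; congr 1; ring
  apply le_antisymm
  · intro x hx
    obtain ⟨a, ha⟩ := hx
    obtain ⟨b, hb⟩ := hmdiv a
    obtain ⟨c, hc⟩ := key (l + 1) (p ^ (n + r) • res b) ⟨res b, rfl⟩
    refine ⟨N c, ?_⟩
    have hc' : p ^ (n + r + (l + 1)) • c = p ^ (n + r) • res b := hc
    have ha' : p ^ (l + n + r) • a = x := ha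
    show p ^ (l + n + r + 1) • N c = x
    have h1 : p ^ (l + n + r + 1) • N c = N (p ^ (n + r + (l + 1)) • c) := by
      rw [map_nsmul]
      congr 1
      ring_nf
    rw [h1, hc', map_nsmul, hNres, smul_smul, ← ha', ← hb, smul_smul]
    congr 1; ring
  · intro x hx
    obtain ⟨a, ha⟩ := hx
    refine ⟨p • a, ?_⟩
    have : p ^ (l + n + r + 1) • a = x := ha
    show p ^ (l + n + r) • (p • a) = x
    rw [smul_smul, ← pow_succ, this]
end

section
/- Let E be an elliptic curve over a p-adic field K with good ordinary reduction, with Néron model E and reduction Ē over the residue field k. Assume E[p] is not contained in E(K) but there is an exact sequence 0 → μ_p → E[p] → ℤ/p → 0 of G_K-modules with Ê[p] ⊂ Ê(O_K). Let b ∈ Ē[p](k) be a nonzero p-torsion point of the reduction and b̃ ∈ E(K) any lift of b under the (surjective) reduction map E(K) → Ē(k). Then p·b̃ is a nonzero element of the kernel of reduction, hence p·b̃ = j(u) for a point u of the formal group Ê(O_K) ≅ O_K under the exact sequence 0 → Ê(O_K) → E(K) → Ē(k) → 0, and the class of u in O_K^×/(O_K^×)^p (under Ê/[p] ≅ Ū⁰)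 is nontrivial and independent of the choice of lift b̃. -/
/-- Construction of the Serre–Tate parameter.  Abstracting the exact sequence
`0 → Ê(O_K) →ⱼ E(K) →ʳ Ē(k) → 0` (formal group, K-points, reduction): assume
the formal group contains a nonzero `p`-torsion point (`Ê[p] ⊂ Ê(O_K)`) and
that every `K`-rational `p`-torsion point of `E` lies in the formal group (this
encodes `E[p] ⊄ E(K)`, i.e. the non-splitting of `0 → μ_p → E[p] → ℤ/p → 0`).
Let `b ∈ Ē[p](k)` be nonzero and `b̃ ∈ E(K)` any lift of `b`.  Then `p·b̃` is a
nonzero element of the kernel of reduction, hence `p·b̃ = j(u)` for some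
`u ∈ Ê(O_K)`, whose class modulo `p·Ê(O_K)` (i.e. in `O_K^×/(O_K^×)^p` under
`Ê/[p] ≅ Ū⁰`) is nontrivial and independent of the choice of lift. -/
theorem stmt15 (p : ℕ) (hp : p.Prime)
    (F EK Ek : Type) [AddCommGroup F] [AddCommGroup EK] [AddCommGroup Ek]
    (j : F →+ EK) (r : EK →+ Ek)
    (hj : Function.Injective j) (hr : Function.Surjective r)
    (hexact : j.range = r.ker)
    (hform : ∃ w : F, w ≠ 0 ∧ p • w = 0)
    (hns : ∀ x : EK, p • x = 0 → x ∈ j.range)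
    (b : Ek) (hb : b ≠ 0) (hbp : p • b = 0)
    (btil : EK) (hlift : r btil = b) :
    p • btil ≠ 0 ∧ r (p • btil) = 0 ∧
      ∃ u : F, j u = p • btil ∧ (¬ ∃ v : F, p • v = u) ∧
        ∀ btil' : EK, r btil' = b → ∀ u' : F, j u' = p • btil' →
          ∃ w : F, u - u' = p • w := by
  have hne : p • btil ≠ 0 := by
    intro h
    have : btil ∈ j.range := hns btil h
    rw [hexact, AddMonoidHom.mem_ker] at this
    exact hb (hlift ▸ this)
  have hker : r (p • btil) = 0 := by
    rw [map_nsmul, hlift, hbp]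
  refine ⟨hne, hker, ?_⟩
  have : p • btil ∈ j.range := by rw [hexact, AddMonoidHom.mem_ker]; exact hker
  obtain ⟨u, hu⟩ := this
  refine ⟨u, hu, ?_, ?_⟩
  · rintro ⟨v, hv⟩
    have h1 : p • (btil - j v) = 0 := by
      rw [smul_sub, ← map_nsmul, hv, hu, sub_self]
    have h2 : btil - j v ∈ j.range := hns _ h1
    rw [hexact, AddMonoidHom.mem_ker] at h2
    rw [map_sub] at h2
    have : r (j v) = 0 := by
      have : j v ∈ r.ker := hexact ▸ ⟨v, rfl⟩
      exact this
    rw [this, sub_zero, hlift] at h2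
    exact hb h2
  · intro btil' hlift' u' hu'
    have : btil - btil' ∈ j.range := by
      rw [hexact, AddMonoidHom.mem_ker, map_sub, hlift, hlift', sub_self]
    obtain ⟨w, hw⟩ := this
    refine ⟨w, hj ?_⟩
    rw [map_sub, hu, hu', map_nsmul, hw, ← smul_sub]
end
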